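/- Let G be a finitely generated infinite group and π : G → H a surjective group homomorphism onto an infinite group H. Let d_G be a word metric on G and d_H a word metric on H (with respect to finite symmetric generating sets), with |x|_G = d_G(x,1) and |q|_H = d_H(q,1). Assume there exists C ≥ 1 such that |π(x)|_H ≤ C·|x|_G for every x ∈ G, and for every q ∈ H there exists x ∈ G with π(x) = q and |x|_G ≤ C·|q|_H. Fix an integer M > C and define D(x,y) = max{ d_G(x,y), M·d_H(π(x),π(y)) }. Then for every metric functional h ∈ ∂(H,d_H) there exists a metric functional f ∈ ∂(G,D) with f(x) = M·h(π(x)) for all x ∈ G; in particular the orbit of f under G has cardinality at most the cardinality of the orbit of h under H. -/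

import Mathlib

/-! Lift a sequence `u n` with `b_{u n} → h` to `v n` with `π (v n) = u n` and
`|v n|_S ≤ C |u n|_T`. Since `h` is not a Busemann function, `|u n|_T → ∞`, and because `M > C`
the term `M d_T(π (v n), π y)` eventually dominates `d_S(v n, y)` for each fixed `y`; hence the
`D`-Busemann functions of `v n` converge to `M · h ∘ π`. Conversely, lifts with `|z|_S ≤ C |π z|_T`
make `D(x, x z) = M d_T(π x, π (x z))`, so `M · h ∘ π = b_x` would force `h = b_{π x}`. Finally
`x.(M · h ∘ π) = M · (π x).h ∘ π`, so the orbit of the lift is an image of the orbit of `h`. -/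

open Filter Topology

section Defs

variable {G : Type*}

/-- `d` is a metric on `X` (nonnegative, vanishing exactly on the diagonal,
symmetric, triangle inequality). -/
def IsMetric {X : Type*} (d : X → X → ℝ) : Prop :=
  (∀ x y, 0 ≤ d x y) ∧ (∀ x y, d x y = 0 ↔ x = y) ∧ (∀ x y, d x y = d y x) ∧
    (∀ x y z, d x z ≤ d x y + d y z)

/-- The Busemann function of `x` with base point `1`: `b_x(y) = d(x,y) - d(x,1)`. -/
def bus [Group G] (d : G → G → ℝ) (x y : G) : ℝ := d x y - d x 1

/-- `h` belongs to the metric-functional boundary `∂(G,d)`: it is a pointwise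
limit of Busemann functions and is not itself a Busemann function. -/
def InBoundary [Group G] (d : G → G → ℝ) (h : G → ℝ) : Prop :=
  (∃ u : ℕ → G, ∀ y : G, Tendsto (fun n => bus d (u n) y) atTop (𝓝 (h y))) ∧
    ∀ x : G, h ≠ bus d x

/-- The action of `x ∈ G` on functions: `(x.h)(y) = h(x⁻¹y) - h(x⁻¹)`. -/
def act [Group G] (x : G) (h : G → ℝ) : G → ℝ := fun y => h (x⁻¹ * y) - h x⁻¹

/-- `S` is a finite symmetric generating set of `G`. -/
def FinSymGen [Group G] (S : Set G) : Prop :=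
  S.Finite ∧ (∀ s ∈ S, s⁻¹ ∈ S) ∧ Subgroup.closure S = ⊤

/-- The word length of `x` with respect to `S`: the least `n` such that `x`
is a product of `n` elements of `S`. -/
noncomputable def wordLength [Group G] (S : Set G) (x : G) : ℕ :=
  sInf {n : ℕ | ∃ l : List G, (∀ s ∈ l, s ∈ S) ∧ l.length = n ∧ l.prod = x}

/-- The word metric with respect to `S` : `d_S(x,y) = |x⁻¹y|_S`. -/
noncomputable def wordDist [Group G] (S : Set G) (x y : G) : ℝ :=
  (wordLength S (x⁻¹ * y) : ℝ)

/-- `(G,d)` is quasi-isometric to a Cayley graph of `G`. -/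
def QIToCayley [Group G] (d : G → G → ℝ) : Prop :=
  ∃ S : Set G, FinSymGen S ∧ ∃ φ : G → G, ∃ C : ℝ, 0 < C ∧
    (∀ y : G, ∃ x : G, wordDist S (φ x) y ≤ C) ∧
    ∀ x y : G, C⁻¹ * d x y - C ≤ wordDist S (φ x) (φ y) ∧
      wordDist S (φ x) (φ y) ≤ C * d x y + C

/-- A Banach metric on `G`: an integer-valued, left-invariant, proper metric,
quasi-isometric to a Cayley graph, all of whose metric functionals are unbounded. -/
def IsBanachMetric [Group G] (d : G → G → ℝ) : Prop :=
  IsMetric d ∧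
  (∀ x y : G, ∃ n : ℕ, d x y = n) ∧
  (∀ x y z : G, d (z * x) (z * y) = d x y) ∧
  (∀ r : ℝ, {x : G | d x 1 ≤ r}.Finite) ∧
  QIToCayley d ∧
  ∀ h : G → ℝ, InBoundary d h → ¬ ∃ B : ℝ, ∀ x : G, |h x| ≤ B

/-- A virtual homomorphism on `G`: a function `φ : G → ℤ` restricting to a
nontrivial homomorphism on some finite index subgroup. -/
def IsVirtualHom [Group G] (φ : G → ℤ) : Prop :=
  ∃ H : Subgroup G, H.FiniteIndex ∧
    (∀ a b : G, a ∈ H → b ∈ H → φ (a * b) = φ a + φ b) ∧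
    ∃ a ∈ H, φ a ≠ 0

end Defs

open Function

section WordLength

variable {G : Type*} [Group G] {S : Set G}

lemma exists_list_prod_eq_of_finSymGen (hS : FinSymGen S) (x : G) :
    ∃ l : List G, (∀ s ∈ l, s ∈ S) ∧ l.prod = x := by
  have hx : x ∈ Submonoid.closure (S ∪ S⁻¹) := by
    rw [← Subgroup.closure_toSubmonoid, hS.2.2]; trivial
  rw [Set.union_eq_left.2 fun s hs => by simpa using hS.2.1 _ hs] at hx
  exact Submonoid.exists_list_of_mem_closure hx

lemma exists_list_length_eq_wordLength (hS : FinSymGen S) (x : G) :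
    ∃ l : List G, (∀ s ∈ l, s ∈ S) ∧ l.length = wordLength S x ∧ l.prod = x := by
  obtain ⟨l, hl, hp⟩ := exists_list_prod_eq_of_finSymGen hS x
  exact Nat.sInf_mem (s := {n | ∃ l : List G, (∀ s ∈ l, s ∈ S) ∧ l.length = n ∧ l.prod = x})
    ⟨l.length, l, hl, rfl, hp⟩

lemma wordLength_le_length {l : List G} (hl : ∀ s ∈ l, s ∈ S) :
    wordLength S l.prod ≤ l.length :=
  Nat.sInf_le ⟨l, hl, rfl, rfl⟩

@[simp]
lemma wordLength_one : wordLength S (1 : G) = 0 :=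
  Nat.le_zero.1 (wordLength_le_length (l := []) (by simp))

lemma wordLength_mul_le (hS : FinSymGen S) (x y : G) :
    wordLength S (x * y) ≤ wordLength S x + wordLength S y := by
  obtain ⟨l₁, hl₁, hlen₁, rfl⟩ := exists_list_length_eq_wordLength hS x
  obtain ⟨l₂, hl₂, hlen₂, rfl⟩ := exists_list_length_eq_wordLength hS y
  rw [← hlen₁, ← hlen₂, ← List.length_append, ← List.prod_append]
  exact wordLength_le_length fun s hs => (List.mem_append.1 hs).elim (hl₁ s) (hl₂ s)

lemma wordLength_inv_le (hS : FinSymGen S) (x : G) : wordLength S x⁻¹ ≤ wordLength S x := by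
  obtain ⟨l, hl, hlen, rfl⟩ := exists_list_length_eq_wordLength hS x
  rw [← hlen, List.prod_inv_reverse]
  refine (wordLength_le_length fun s hs => ?_).trans_eq (by simp)
  obtain ⟨t, ht, rfl⟩ := List.mem_map.1 (List.mem_reverse.1 hs)
  exact hS.2.1 t (hl t ht)

@[simp]
lemma wordLength_inv (hS : FinSymGen S) (x : G) : wordLength S x⁻¹ = wordLength S x :=
  (wordLength_inv_le hS x).antisymm (by simpa using wordLength_inv_le hS x⁻¹)

lemma finite_setOf_wordLength_le (hS : FinSymGen S) (n : ℕ) :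
    {x : G | wordLength S x ≤ n}.Finite := by
  have : Finite S := hS.1
  refine ((List.finite_length_le S n).image fun l => (l.map (↑)).prod).subset ?_
  intro x hx
  obtain ⟨l, hl, hlen, rfl⟩ := exists_list_length_eq_wordLength hS x
  lift l to List S using hl
  refine ⟨l, ?_, rfl⟩
  show l.length ≤ n
  rw [← List.length_map (f := ((↑) : S → G)), hlen]
  exact hx

lemma tendsto_wordLength_cofinite_atTop (hS : FinSymGen S) :
    Tendsto (wordLength S) cofinite atTop :=
  tendsto_atTop.2 fun n => eventually_cofinite.2 <|
    (finite_setOf_wordLength_le hS n).subset fun _ hx => (not_le.1 hx).le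

end WordLength

section Busemann

variable {G : Type*} [Group G] {d : G → G → ℝ} {h : G → ℝ} {u : ℕ → G}

lemma eventually_ne_of_tendsto_bus
    (hu : ∀ y, Tendsto (fun n => bus d (u n) y) atTop (𝓝 (h y))) {x : G} (hx : h ≠ bus d x) :
    ∀ᶠ n in atTop, u n ≠ x := by
  by_contra hc
  simp only [not_eventually, not_not] at hc
  exact hx <| funext fun y =>
    tendsto_nhds_unique_of_frequently_eq (hu y) tendsto_const_nhds (hc.mono fun n hn => by rw [hn])

lemma tendsto_cofinite_of_tendsto_bus
    (hu : ∀ y, Tendsto (fun n => bus d (u n) y) atTop (𝓝 (h y))) (hh : ∀ x, h ≠ bus d x) :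
    Tendsto u atTop cofinite := fun s hs => mem_map.2 <| by
  filter_upwards [(mem_cofinite.1 hs).eventually_all.2 fun x _ =>
    eventually_ne_of_tendsto_bus hu (hh x)] with n hn
  by_contra hns
  exact hn (u n) hns rfl

end Busemann

lemma exists_injective_range_of_factor {X Y A B : Type*} {a : X → A} {b : Y → B} (p : X → Y)
    (Φ : B → A) (hab : ∀ x, a x = Φ (b (p x))) : ∃ ι : Set.range a → Set.range b, Injective ι := by
  refine ⟨fun g => ⟨b (p g.2.choose), p g.2.choose, rfl⟩, fun g₁ g₂ hg => Subtype.ext ?_⟩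
  rw [← g₁.2.choose_spec, ← g₂.2.choose_spec, hab, hab]
  exact congrArg Φ (congrArg Subtype.val hg)

section Lift

variable {G H : Type*} [Group G] [Group H] {S : Set G} {T : Set H} (π : G →* H)

noncomputable def maxWordDist (S : Set G) (T : Set H) (M : ℝ) (x y : G) : ℝ :=
  max (wordDist S x y) (M * wordDist T (π x) (π y))

variable {π} {M C : ℝ}

lemma maxWordDist_eq_right {x y : G}
    (hxy : (wordLength S (x⁻¹ * y) : ℝ) ≤ M * wordLength T (π (x⁻¹ * y))) :
    maxWordDist π S T M x y = M * wordDist T (π x) (π y) :=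
  max_eq_right <| by simpa [wordDist] using hxy

lemma wordLength_inv_mul_le_of_far (hS : FinSymGen S) (hT : FinSymGen T) (hM : 0 ≤ M) {v y : G}
    (hv : (wordLength S v : ℝ) ≤ C * wordLength T (π v))
    (hy : wordLength S y + M * wordLength T (π y) ≤ (M - C) * wordLength T (π v)) :
    (wordLength S (v⁻¹ * y) : ℝ) ≤ M * wordLength T (π (v⁻¹ * y)) := by
  have hS_tri : (wordLength S (v⁻¹ * y) : ℝ) ≤ wordLength S v + wordLength S y := by
    exact_mod_cast (wordLength_mul_le hS _ _).trans_eq (by rw [wordLength_inv hS])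
  have hT_tri : (wordLength T (π v) : ℝ) ≤ wordLength T (π (v⁻¹ * y)) + wordLength T (π y) := by
    have := wordLength_mul_le hT ((π v)⁻¹ * π y) (π y)⁻¹
    rw [mul_inv_cancel_right, wordLength_inv hT, wordLength_inv hT] at this
    rw [map_mul, map_inv]
    exact_mod_cast this
  nlinarith

lemma bus_maxWordDist_eq_of_far (hS : FinSymGen S) (hT : FinSymGen T) (hC : 0 ≤ C)
    (hCM : C ≤ M) {v y : G} (hv : (wordLength S v : ℝ) ≤ C * wordLength T (π v))
    (hy : wordLength S y + M * wordLength T (π y) ≤ (M - C) * wordLength T (π v)) :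
    bus (maxWordDist π S T M) v y = M * bus (wordDist T) (π v) (π y) := by
  have hy₁ : (wordLength S (1 : G) : ℝ) + M * wordLength T (π 1) ≤
      (M - C) * wordLength T (π v) := by
    simpa using mul_nonneg (sub_nonneg.2 hCM) (Nat.cast_nonneg _)
  rw [bus, bus, maxWordDist_eq_right (wordLength_inv_mul_le_of_far hS hT (hC.trans hCM) hv hy),
    maxWordDist_eq_right (wordLength_inv_mul_le_of_far hS hT (hC.trans hCM) hv hy₁), map_one,
    mul_sub]

lemma tendsto_bus_maxWordDist (hS : FinSymGen S) (hT : FinSymGen T) (hC : 0 ≤ C) (hCM : C < M)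
    {h : H → ℝ} {u : ℕ → H} (hu : ∀ q, Tendsto (fun n => bus (wordDist T) (u n) q) atTop (𝓝 (h q)))
    (hh : ∀ q, h ≠ bus (wordDist T) q) {v : ℕ → G} (hvu : ∀ n, π (v n) = u n)
    (hv : ∀ n, (wordLength S (v n) : ℝ) ≤ C * wordLength T (u n)) (y : G) :
    Tendsto (fun n => bus (maxWordDist π S T M) (v n) y) atTop (𝓝 (M * h (π y))) := by
  have hu_far : Tendsto (fun n => (wordLength T (u n) : ℝ)) atTop atTop :=
    tendsto_natCast_atTop_atTop.comp
      ((tendsto_wordLength_cofinite_atTop hT).comp (tendsto_cofinite_of_tendsto_bus hu hh))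
  refine ((hu (π y)).const_mul M).congr' ?_
  filter_upwards [hu_far.eventually_ge_atTop ((wordLength S y + M * wordLength T (π y)) / (M - C))]
    with n hn
  rw [div_le_iff₀ (sub_pos.2 hCM)] at hn
  rw [bus_maxWordDist_eq_of_far hS hT hC hCM.le ((hv n).trans_eq (by rw [hvu]))
    (by rw [hvu]; linarith), hvu]

lemma eq_bus_of_comp_eq_bus_maxWordDist (hM : 0 < M) (hCM : C ≤ M)
    (hlift : ∀ q, ∃ x, π x = q ∧ (wordLength S x : ℝ) ≤ C * wordLength T q) {h : H → ℝ} {x : G}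
    (hx : (fun y => M * h (π y)) = bus (maxWordDist π S T M) x) :
    h = bus (wordDist T) (π x) := by
  have key : ∀ q, M * h q = M * wordDist T (π x) q - maxWordDist π S T M x 1 := fun q => by
    -- a lift `x * z` of `q` with `|z|_S ≤ C |π z|_T` realises `D(x, x z) = M d_T(π x, q)`
    obtain ⟨z, hz, hzS⟩ := hlift ((π x)⁻¹ * q)
    have hq : π (x * z) = q := by rw [map_mul, hz, mul_inv_cancel_left]
    have hD : maxWordDist π S T M x (x * z) = M * wordDist T (π x) q := by
      rw [maxWordDist_eq_right, hq]
      rw [inv_mul_cancel_left, hz]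
      exact hzS.trans (mul_le_mul_of_nonneg_right hCM (Nat.cast_nonneg _))
    simpa only [bus, hq, hD] using congrFun hx (x * z)
  have h₁ : M * h 1 = 0 := by simpa [bus] using congrFun hx 1
  funext q
  refine mul_left_cancel₀ hM.ne' ?_
  rw [key q, bus, mul_sub]
  linarith [key 1]

end Lift

lemma act_comp_monoidHom {G H : Type*} [Group G] [Group H] (π : G →* H) (M : ℝ) (h : H → ℝ)
    (x : G) : act x (fun y => M * h (π y)) = fun y => M * act (π x) h (π y) := by
  funext y
  simp [act, mul_sub]

theorem boundary_lift_of_max_word_metric_general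
    {G H : Type*} [Group G] [Group H]
    (π : G →* H)
    (S : Set G) (hS : FinSymGen S) (T : Set H) (hT : FinSymGen T)
    (C : ℝ) (hC : 1 ≤ C)
    (h2 : ∀ q : H, ∃ x : G, π x = q ∧ (wordLength S x : ℝ) ≤ C * (wordLength T q : ℝ))
    (M : ℤ) (hM : C < (M : ℝ)) :
    ∀ h : H → ℝ, InBoundary (wordDist T) h →
      ∃ f : G → ℝ,
        InBoundary
          (fun x y : G => max (wordDist S x y) ((M : ℝ) * wordDist T (π x) (π y))) f ∧
        (∀ x : G, f x = (M : ℝ) * h (π x)) ∧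
        ∃ ι : (Set.range fun x : G => act x f) → (Set.range fun x : H => act x h),
          Function.Injective ι := by
  rintro h ⟨⟨u, hu⟩, hh⟩
  have hC₀ : 0 ≤ C := by linarith
  choose v hvu hv using fun n => h2 (u n)
  have hv' : ∀ n, (wordLength S (v n) : ℝ) ≤ C * wordLength T (u n) := by
    simpa only [hvu] using hv
  refine ⟨fun x => M * h (π x), ⟨⟨v, tendsto_bus_maxWordDist hS hT hC₀ hM hu hh hvu hv'⟩, ?_⟩,
    fun _ => rfl, ?_⟩
  · exact fun x hx => hh (π x) (eq_bus_of_comp_eq_bus_maxWordDist (by linarith) hM.le h2 hx)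
  · exact exists_injective_range_of_factor π (fun k y => M * k (π y)) (act_comp_monoidHom π M h)

/-- With `D = max(d_G, M·d_H∘π)` as in the construction, every
metric functional `h ∈ ∂(H,d_H)` lifts to `f ∈ ∂(G,D)` with `f = M·h∘π`; in
particular the orbit of `f` injects into the orbit of `h`. -/
theorem boundary_lift_of_max_word_metric
    {G H : Type*} [Group G] [Group H] [Infinite G] [Infinite H]
    (π : G →* H) (hπ : Function.Surjective π)
    (S : Set G) (hS : FinSymGen S) (T : Set H) (hT : FinSymGen T)
    (C : ℝ) (hC : 1 ≤ C)
    (h1 : ∀ x : G, (wordLength T (π x) : ℝ) ≤ C * (wordLength S x : ℝ))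
    (h2 : ∀ q : H, ∃ x : G, π x = q ∧ (wordLength S x : ℝ) ≤ C * (wordLength T q : ℝ))
    (M : ℤ) (hM : C < (M : ℝ)) :
    ∀ h : H → ℝ, InBoundary (wordDist T) h →
      ∃ f : G → ℝ,
        InBoundary
          (fun x y : G => max (wordDist S x y) ((M : ℝ) * wordDist T (π x) (π y))) f ∧
        (∀ x : G, f x = (M : ℝ) * h (π x)) ∧
        ∃ ι : (Set.range fun x : G => act x f) → (Set.range fun x : H => act x h),
          Function.Injective ι :=
  boundary_lift_of_max_word_metric_general π S hS T hT C hC h2 M hM
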